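/- arXiv:math/0703896 — 4 statements merged into one kernel-verified Lean document; each statement's English description precedes it below -/
import Mathlib

section
/- Ryser's formula for derangements: D(n) = Σ_{r=0}^{n} (-1)^r · C(n,r) · (n-r)^r · (n-r-1)^{n-r} for all n ≥ 1. -/
open Finset

/-- Inner inclusion–exclusion sum: summing `(-1)^(n - |S|)` over supersets of `R`. -/
lemma ryser_ie_aux {n : ℕ} (R : Finset (Fin n)) :
    ∑ S : Finset (Fin n), (if R ⊆ S then ((-1 : ℤ)) ^ (n - S.card) else 0)
      = if R = univ then 1 else 0 := by
  have hinv : Function.Involutive (fun S : Finset (Fin n) => Sᶜ) := fun S => compl_compl S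
  rw [← Function.Bijective.sum_comp hinv.bijective
    (fun S => if R ⊆ S then ((-1 : ℤ)) ^ (n - S.card) else 0)]
  have h1 : ∀ S : Finset (Fin n),
      (if R ⊆ Sᶜ then ((-1 : ℤ)) ^ (n - Sᶜ.card) else 0)
        = if S ⊆ Rᶜ then ((-1 : ℤ)) ^ S.card else 0 := by
    intro S
    have hc : Sᶜ.card = n - S.card := by
      simp [Finset.card_compl]
    have hle : S.card ≤ n := by
      simpa using Finset.card_le_card (Finset.subset_univ S)
    rw [hc, Nat.sub_sub_self hle]
    exact if_congr Finset.subset_compl_comm rfl rfl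
  simp only [h1]
  rw [← Finset.sum_filter]
  have h2 : (univ : Finset (Finset (Fin n))).filter (· ⊆ Rᶜ) = Rᶜ.powerset := by
    ext S; simp [Finset.mem_powerset]
  rw [h2, Finset.sum_powerset_neg_one_pow_card]
  by_cases h : R = univ <;> simp [h, Finset.compl_eq_empty_iff]

/-- The number of fixed-point-free surjective self-maps of `Fin n` is `numDerangements n`. -/
lemma ryser_card_aux (n : ℕ) :
    (∑ f : Fin n → Fin n,
        (if (∀ i, f i ≠ i) ∧ Function.Surjective f then (1 : ℤ) else 0))
      = numDerangements n := by
  rw [Finset.sum_boole]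
  have e : {f : Fin n → Fin n // (∀ i, f i ≠ i) ∧ Function.Surjective f}
      ≃ derangements (Fin n) := by
    refine
      { toFun := fun f => ⟨Equiv.ofBijective f.1
          (Finite.surjective_iff_bijective.mp f.2.2), fun i => f.2.1 i⟩
        invFun := fun e => ⟨e.1, fun i => e.2 i, e.1.surjective⟩
        left_inv := fun f => rfl
        right_inv := fun e => Subtype.ext (Equiv.ext fun x => rfl) }
  have : (Finset.univ.filter
      (fun f : Fin n → Fin n => (∀ i, f i ≠ i) ∧ Function.Surjective f)).card
      = numDerangements n := by
    rw [← Fintype.card_subtype, Fintype.card_congr e,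
      card_derangements_fin_eq_numDerangements]
  rw [this]

theorem ryser_derangements (n : ℕ) (hn : 1 ≤ n) :
    (numDerangements n : ℤ) =
      ∑ r ∈ Finset.range (n + 1),
        (-1 : ℤ) ^ r * (n.choose r : ℤ) * ((n - r) ^ r : ℕ) * ((n - r - 1) ^ (n - r) : ℕ) := by
  classical
  -- The key inclusion–exclusion sum
  have key : (∑ S : Finset (Fin n),
        ((-1 : ℤ)) ^ (n - S.card) * ∏ i : Fin n, ((S.erase i).card : ℤ))
      = numDerangements n := by
    have hprod : ∀ S : Finset (Fin n),
        (∏ i : Fin n, ((S.erase i).card : ℤ))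
          = ∑ f : Fin n → Fin n, ∏ i : Fin n, (if f i ∈ S.erase i then (1 : ℤ) else 0) := by
      intro S
      calc (∏ i : Fin n, ((S.erase i).card : ℤ))
          = ∏ i : Fin n, ∑ y : Fin n, (if y ∈ S.erase i then (1 : ℤ) else 0) := by
            refine Finset.prod_congr rfl fun i _ => ?_
            rw [Finset.sum_ite_mem, Finset.univ_inter, Finset.sum_const, nsmul_eq_mul, mul_one]
        _ = ∑ f : Fin n → Fin n, ∏ i : Fin n, (if f i ∈ S.erase i then (1 : ℤ) else 0) := by
            exact Fintype.prod_sum _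
    calc
      (∑ S : Finset (Fin n),
          ((-1 : ℤ)) ^ (n - S.card) * ∏ i : Fin n, ((S.erase i).card : ℤ))
          = ∑ S : Finset (Fin n), ∑ f : Fin n → Fin n,
              ((-1 : ℤ)) ^ (n - S.card)
                * ∏ i : Fin n, (if f i ∈ S.erase i then (1 : ℤ) else 0) := by
            refine Finset.sum_congr rfl fun S _ => ?_
            rw [hprod S, Finset.mul_sum]
      _ = ∑ f : Fin n → Fin n, ∑ S : Finset (Fin n),
              ((-1 : ℤ)) ^ (n - S.card)
                * ∏ i : Fin n, (if f i ∈ S.erase i then (1 : ℤ) else 0) :=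
            Finset.sum_comm
      _ = ∑ f : Fin n → Fin n,
            (if (∀ i, f i ≠ i) ∧ Function.Surjective f then (1 : ℤ) else 0) := by
            refine Finset.sum_congr rfl fun f _ => ?_
            have h1 : ∀ S : Finset (Fin n),
                ((-1 : ℤ)) ^ (n - S.card)
                    * ∏ i : Fin n, (if f i ∈ S.erase i then (1 : ℤ) else 0)
                  = if (∀ i, f i ≠ i) then
                      (if Finset.image f univ ⊆ S then ((-1 : ℤ)) ^ (n - S.card) else 0)
                    else 0 := by
              intro S
              have hiff : (∀ i, f i ∈ S.erase i)
                  ↔ ((∀ i, f i ≠ i) ∧ Finset.image f univ ⊆ S) := by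
                constructor
                · intro h
                  refine ⟨fun i => (Finset.mem_erase.mp (h i)).1, ?_⟩
                  rw [Finset.image_subset_iff]
                  exact fun i _ => (Finset.mem_erase.mp (h i)).2
                · rintro ⟨h1, h2⟩ i
                  exact Finset.mem_erase.mpr
                    ⟨h1 i, h2 (Finset.mem_image_of_mem f (Finset.mem_univ i))⟩
              rw [Fintype.prod_boole]
              by_cases h : ∀ i, f i ∈ S.erase i
              · rw [if_pos h]
                obtain ⟨hd, hs⟩ := hiff.mp h
                rw [if_pos hd, if_pos hs, mul_one]
              · rw [if_neg h, mul_zero]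
                by_cases hd : ∀ i, f i ≠ i
                · rw [if_pos hd, if_neg (fun hs => h (hiff.mpr ⟨hd, hs⟩))]
                · rw [if_neg hd]
            simp only [h1]
            by_cases hd : (∀ i, f i ≠ i)
            · rw [Finset.sum_congr rfl (fun S _ => if_pos hd),
                ryser_ie_aux (Finset.image f univ)]
              have : Finset.image f univ = univ ↔ Function.Surjective f := by
                constructor
                · intro h j
                  have : j ∈ Finset.image f univ := by rw [h]; exact Finset.mem_univ j
                  obtain ⟨i, _, hi⟩ := Finset.mem_image.mp this
                  exact ⟨i, hi⟩
                · intro h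
                  apply Finset.eq_univ_of_forall
                  intro j
                  obtain ⟨i, hi⟩ := h j
                  exact Finset.mem_image.mpr ⟨i, Finset.mem_univ i, hi⟩
              by_cases hs : Function.Surjective f
              · rw [if_pos (this.mpr hs), if_pos ⟨hd, hs⟩]
              · rw [if_neg (fun h => hs (this.mp h)), if_neg (fun h => hs h.2)]
            · rw [Finset.sum_congr rfl (fun S _ => if_neg hd), Finset.sum_const_zero,
                if_neg (fun h => hd h.1)]
      _ = numDerangements n := ryser_card_aux n
  -- Evaluate the product over `i` as a function of `|S|`
  have hprod2 : ∀ S : Finset (Fin n),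
      (∏ i : Fin n, ((S.erase i).card : ℤ))
        = (((S.card - 1) ^ S.card * S.card ^ (n - S.card) : ℕ) : ℤ) := by
    intro S
    have : (∏ i : Fin n, (S.erase i).card)
        = (S.card - 1) ^ S.card * S.card ^ (n - S.card) := by
      rw [← Finset.prod_mul_prod_compl S (fun i => (S.erase i).card)]
      have h1 : ∏ i ∈ S, (S.erase i).card = (S.card - 1) ^ S.card := by
        rw [Finset.prod_congr rfl fun i hi => Finset.card_erase_of_mem hi,
          Finset.prod_const]
      have h2 : ∏ i ∈ Sᶜ, (S.erase i).card = S.card ^ (n - S.card) := by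
        rw [Finset.prod_congr rfl fun i hi =>
          congrArg Finset.card (Finset.erase_eq_of_notMem (Finset.mem_compl.mp hi))]
        rw [Finset.prod_const, Finset.card_compl, Fintype.card_fin]
      rw [h1, h2]
    rw [← this]
    push_cast
    rfl
  -- Group by cardinality
  rw [← key]
  simp only [hprod2]
  have hgroup : (∑ S : Finset (Fin n),
        ((-1 : ℤ)) ^ (n - S.card) * (((S.card - 1) ^ S.card * S.card ^ (n - S.card) : ℕ) : ℤ))
      = ∑ k ∈ Finset.range (n + 1), n.choose k •
          (((-1 : ℤ)) ^ (n - k) * (((k - 1) ^ k * k ^ (n - k) : ℕ) : ℤ)) := by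
    rw [← Finset.powerset_univ, Finset.sum_powerset_apply_card
      (fun k => ((-1 : ℤ)) ^ (n - k) * (((k - 1) ^ k * k ^ (n - k) : ℕ) : ℤ))]
    simp [Finset.card_univ]
  rw [hgroup]
  rw [← Finset.sum_range_reflect]
  refine Finset.sum_congr rfl fun r hr => ?_
  have hr' : r ≤ n := by
    have := Finset.mem_range.mp hr; omega
  have h1 : n + 1 - 1 - r = n - r := by omega
  have h2 : n - (n - r) = r := by omega
  rw [h1, h2, Nat.choose_symm hr']
  push_cast
  ring
end

section
/- By inclusion-exclusion over the set of omitted front halls, the number of derangements satisfies D(n) = Σ_{r=0}^{n} (-1)^r C(n,r) (n-r)^r (n-r-1)^{n-r}: for each r-subset H of {1,...,n}, the number of f : {1,...,n} → {1,...,n} with f(j) ≠ j and f(j) ∉ H for all j is (n-r)^r (n-r-1)^{n-r}, and summing with signs counts the surjective such f, i.e. the f that are permutations. -/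
open Finset

-- Part 1 as a lemma
lemma count_avoid (n : ℕ) (H : Finset (Fin n)) :
    Nat.card {f : Fin n → Fin n // (∀ j, f j ≠ j) ∧ ∀ j, f j ∉ H} =
      (n - H.card) ^ H.card * (n - H.card - 1) ^ (n - H.card) := by
  classical
  have hequiv : {f : Fin n → Fin n // (∀ j, f j ≠ j) ∧ ∀ j, f j ∉ H} ≃
      ∀ j : Fin n, {x : Fin n // x ∈ (insert j H)ᶜ} := by
    refine (Equiv.subtypeEquivRight ?_).trans (Equiv.subtypePiEquivPi)
    intro f
    simp only [mem_compl, mem_insert, not_or]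
    constructor
    · rintro ⟨h1, h2⟩ j; exact ⟨h1 j, h2 j⟩
    · intro h; exact ⟨fun j => (h j).1, fun j => (h j).2⟩
  rw [Nat.card_congr hequiv, Nat.card_pi]
  have hcard : ∀ j : Fin n, Nat.card {x : Fin n // x ∈ (insert j H)ᶜ} =
      if j ∈ H then n - H.card else n - H.card - 1 := by
    intro j
    rw [Nat.card_eq_fintype_card, Fintype.card_coe, card_compl, Fintype.card_fin]
    by_cases hj : j ∈ H
    · rw [insert_eq_self.mpr hj, if_pos hj]
    · rw [card_insert_of_notMem hj, if_neg hj]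
      omega
  simp_rw [hcard]
  rw [← prod_mul_prod_compl H]
  rw [prod_ite_of_true (by intro i hi; exact hi), prod_ite_of_false (by intro i hi; exact (mem_compl.mp hi))]
  rw [prod_const, prod_const, card_compl, Fintype.card_fin]

theorem inclusion_exclusion_derangements (n : ℕ) :
    (∀ H : Finset (Fin n),
        Nat.card {f : Fin n → Fin n // (∀ j, f j ≠ j) ∧ ∀ j, f j ∉ H} =
          (n - H.card) ^ H.card * (n - H.card - 1) ^ (n - H.card)) ∧
    (numDerangements n : ℤ) =
      ∑ r ∈ Finset.range (n + 1),
        (-1 : ℤ) ^ r * (n.choose r : ℤ) * ((n - r) ^ r : ℕ) * ((n - r - 1) ^ (n - r) : ℕ) := by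
  classical
  refine ⟨count_avoid n, ?_⟩
  -- the big sum over all H
  set D : Finset (Fin n → Fin n) := univ.filter (fun f => ∀ j, f j ≠ j) with hD
  have key : ∑ H ∈ (univ : Finset (Fin n)).powerset,
      (-1 : ℤ) ^ H.card * ((D.filter (fun f => ∀ j, f j ∉ H)).card : ℤ)
      = (numDerangements n : ℤ) := by
    -- swap the order of summation
    have hswap : ∀ H : Finset (Fin n),
        ((D.filter (fun f => ∀ j, f j ∉ H)).card : ℤ) =
          ∑ f ∈ D, (if ∀ j, f j ∉ H then (1 : ℤ) else 0) := by
      intro H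
      rw [← Finset.sum_boole]
    simp_rw [hswap, Finset.mul_sum]
    rw [Finset.sum_comm]
    have hinner : ∀ f ∈ D, ∑ H ∈ (univ : Finset (Fin n)).powerset,
        (-1 : ℤ) ^ H.card * (if ∀ j, f j ∉ H then (1 : ℤ) else 0)
        = if (Finset.image f univ)ᶜ = ∅ then 1 else 0 := by
      intro f _
      simp_rw [mul_ite, mul_one, mul_zero]
      rw [Finset.sum_ite, Finset.sum_const, smul_zero, add_zero]
      have hfilt : (univ : Finset (Fin n)).powerset.filter (fun H => ∀ j, f j ∉ H)
          = ((Finset.image f univ)ᶜ).powerset := by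
        ext H
        simp only [mem_filter, mem_powerset, subset_univ, true_and, subset_iff,
          mem_compl, mem_image, mem_univ, true_and, not_exists]
        constructor
        · rintro ⟨-, h⟩ x hx j hj; exact h j (hj ▸ hx)
        · intro h; exact ⟨fun x _ => trivial, fun j hj => h hj j rfl⟩
      rw [hfilt, Finset.sum_powerset_neg_one_pow_card]
    rw [Finset.sum_congr rfl hinner]
    have hsurj : ∀ f : Fin n → Fin n,
        ((Finset.image f univ)ᶜ = ∅) ↔ Function.Surjective f := by
      intro f
      rw [← compl_univ, compl_inj_iff, eq_comm]
      constructor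
      · intro h x
        have : x ∈ Finset.image f univ := h ▸ mem_univ x
        obtain ⟨j, _, hj⟩ := mem_image.mp this
        exact ⟨j, hj⟩
      · intro h
        ext x
        simpa using h x
    simp_rw [hsurj]
    rw [Finset.sum_boole]
    norm_cast
    rw [hD, Finset.filter_filter]
    have := Fintype.card_subtype (fun f : Fin n → Fin n => (∀ j, f j ≠ j) ∧ Function.Surjective f)
    rw [← this, ← card_derangements_fin_eq_numDerangements]
    refine Fintype.card_congr ?_
    exact {
      toFun := fun x => ⟨Equiv.ofBijective x.1
        ⟨Finite.injective_iff_surjective.mpr x.2.2, x.2.2⟩, x.2.1⟩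
      invFun := fun σ => ⟨σ.1, σ.2, σ.1.surjective⟩
      left_inv := fun x => rfl
      right_inv := fun σ => Subtype.ext (Equiv.ext fun x => rfl) }
  -- now compute the LHS of key by grouping subsets by cardinality
  rw [← key]
  have hc : ∀ H : Finset (Fin n), (D.filter (fun f => ∀ j, f j ∉ H)).card
      = (n - H.card) ^ H.card * (n - H.card - 1) ^ (n - H.card) := by
    intro H
    rw [hD, Finset.filter_filter, ← Fintype.card_subtype, ← Nat.card_eq_fintype_card]
    exact count_avoid n H
  have hstep : ∀ H ∈ (univ : Finset (Fin n)).powerset,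
      (-1 : ℤ) ^ H.card * ((D.filter (fun f => ∀ j, f j ∉ H)).card : ℤ)
      = (fun r => (-1 : ℤ) ^ r * (((n - r) ^ r * (n - r - 1) ^ (n - r) : ℕ) : ℤ)) H.card :=
    fun H _ => by rw [hc H]
  rw [Finset.sum_congr rfl hstep,
    Finset.sum_powerset_apply_card
      (f := fun r => (-1 : ℤ) ^ r * (((n - r) ^ r * (n - r - 1) ^ (n - r) : ℕ) : ℤ))
      (x := (univ : Finset (Fin n)))]
  simp only [card_univ, Fintype.card_fin, nsmul_eq_mul]
  refine Finset.sum_congr rfl fun r _ => ?_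
  push_cast
  ring
end

section
/- With g(t_{00},t_{10},t_{01},t_{11}) = (t_{00}+t_{10})(t_{00}+t_{01}) - t_{00}, the number of reduced 3×n Latin rectangles satisfies R_3(n) = Σ_{s_{00}+s_{10}+s_{01}+s_{11}=n} (-1)^{s_{10}+s_{01}+2 s_{11}} · multinomial(n; s_{00},s_{10},s_{01},s_{11}) · g(s_{00}-1,s_{10},s_{01},s_{11}+1)^{s_{00}} · g(s_{00},s_{10}-1,s_{01},s_{11}+1)^{s_{10}} · g(s_{00},s_{10},s_{01}-1,s_{11}+1)^{s_{01}} · g(s_{00},s_{10},s_{01},s_{11})^{s_{11}}, where the sum ranges over nonnegative integers summing to n. -/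
def IsLatin {k n : ℕ} (A : Fin k → Fin n → Fin n) : Prop :=
  (∀ i, Function.Injective (A i)) ∧ (∀ j, Function.Injective fun i => A i j)

def g (a b c d : ℤ) : ℤ := (a + b) * (a + c) - a

/-!
Rows two and three of a reduced 3 × n Latin rectangle are permutations `σ, τ` with `σ i ≠ i`,
`τ i ≠ i` and `σ i ≠ τ i`, i.e. maps `p = (σ, τ)` with admissible columns whose two coordinates
are surjective. Inclusion–exclusion over the sets `T₁, T₂` of values missed by `σ` and `τ` turns
the count into a signed sum over pairs `(T₁, T₂)` of products over the columns `i`. The factor of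
column `i` counts the pairs `x ≠ y` with `x, y ≠ i`, `x ∉ T₁`, `y ∉ T₂`; it is `g` evaluated at the
sizes of the four Venn regions of `(T₁, T₂)` among the other columns, so the whole summand depends
only on the region sizes `s` of `(T₁, T₂)`. The pairs with region sizes `s` are counted by
`multinomial(n; s)`, the coefficient of `X^s` in `(X₀ + X₁ + X₂ + X₃)ⁿ`.
-/

open Finset Function

section FiberCount

variable {α β : Type*} [Fintype α] [DecidableEq α] [Fintype β] [DecidableEq β]

theorem card_filter_card_fiber_eq_multinomial (k : α → ℕ) (hk : ∑ a, k a = Fintype.card β) :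
    #{t : β → α | (fun a => #{b | t b = a}) = k} = Nat.multinomial univ k := by
  open MvPolynomial in
  have expand : ((∑ a, X a : MvPolynomial α ℕ) ^ Fintype.card β) =
      ∑ t : β → α, ∏ a, X a ^ #{b | t b = a} := by
    rw [← card_univ, ← prod_const, Fintype.prod_sum]
    refine sum_congr rfl fun t _ => ?_
    rw [← prod_fiberwise' univ t X]
    exact prod_congr rfl fun a _ => prod_const _
  have coeff_k := congrArg (MvPolynomial.coeff (Finsupp.equivFunOnFinite.symm k)) expand
  rw [MvPolynomial.coeff_sum_X_pow_of_fintype, MvPolynomial.coeff_sum,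
    Finsupp.sum_fintype _ _ fun _ => rfl] at coeff_k
  simp only [MvPolynomial.coeff_prod_X_pow, Finsupp.equivFunOnFinite_symm_apply_apply, hk,
    ↓reduceIte, Finsupp.multinomial_eq_of_support_subset (subset_univ _),
    Finsupp.coe_equivFunOnFinite_symm, Nat.cast_id, sum_boole] at coeff_k
  rw [coeff_k]
  congr 1
  ext t
  simp [Finsupp.ext_iff, funext_iff, eq_comm]

theorem sum_fun_card_fiber_eq_sum_multinomial {M : Type*} [AddCommMonoid M] {m : ℕ}
    (F : (Fin m → ℕ) → M) :
    ∑ t : β → Fin m, F (fun j => #{b | t b = j}) =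
      ∑ s ∈ Nat.antidiagonalTuple m (Fintype.card β), Nat.multinomial univ s • F s := by
  have maps (t : β → Fin m) :
      (fun j => #{b | t b = j}) ∈ Nat.antidiagonalTuple m (Fintype.card β) :=
    Nat.mem_antidiagonalTuple.2 (card_eq_sum_card_fiberwise fun b _ => mem_univ (t b)).symm
  rw [← sum_fiberwise_of_maps_to fun t _ => maps t]
  refine sum_congr rfl fun s hs => ?_
  rw [sum_congr rfl fun t ht => congrArg F (mem_filter.1 ht).2, sum_const,
    card_filter_card_fiber_eq_multinomial s (Nat.mem_antidiagonalTuple.1 hs)]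

end FiberCount

theorem card_filter_mem_eq_sum_card_fiber {ι κ : Type*} [DecidableEq κ]
    (s : Finset ι) (f : ι → κ) (S : Finset κ) :
    #{i ∈ s | f i ∈ S} = ∑ j ∈ S, #{i ∈ s | f i = j} := by
  rw [card_eq_sum_card_fiberwise (s := {i ∈ s | f i ∈ S}) (t := S) (f := f)
    fun i hi => (mem_filter.1 hi).2]
  refine sum_congr rfl fun j hj => congrArg card ?_
  rw [filter_filter]
  exact filter_congr fun i _ => ⟨And.right, fun h => ⟨h ▸ hj, h⟩⟩

theorem card_filter_fst_ne_snd_add_card_inter {α : Type*} [DecidableEq α] (A B : Finset α) :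
    #{z ∈ A ×ˢ B | z.1 ≠ z.2} + #(A ∩ B) = #A * #B := by
  have diagonal : {z ∈ A ×ˢ B | z.1 = z.2} = (A ∩ B).diag := by
    ext ⟨a, b⟩
    simp only [mem_filter, mem_product, mem_diag, mem_inter]
    constructor <;> rintro ⟨⟨ha, hb⟩, rfl⟩ <;> exact ⟨⟨ha, hb⟩, rfl⟩
  rw [← diag_card (A ∩ B), ← diagonal, add_comm, card_filter_add_card_filter_not, card_product]

theorem filter_piFinset_forall {ι : Type*} [DecidableEq ι] [Fintype ι] {δ : ι → Type*}
    (t : ∀ i, Finset (δ i)) (q : ∀ i, δ i → Prop) [∀ i, DecidablePred (q i)] :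
    {f ∈ Fintype.piFinset t | ∀ i, q i (f i)} = Fintype.piFinset fun i => {x ∈ t i | q i x} := by
  ext f
  simp [forall_and]

theorem injective_fin_three_iff {α : Type*} {v : Fin 3 → α} :
    Injective v ↔ v 0 ≠ v 1 ∧ v 0 ≠ v 2 ∧ v 1 ≠ v 2 := by
  refine ⟨fun h => ⟨h.ne (by decide), h.ne (by decide), h.ne (by decide)⟩, ?_⟩
  rintro ⟨h01, h02, h12⟩ i j hij
  fin_cases i <;> fin_cases j <;> first | rfl | simp_all [eq_comm]

section InclusionExclusion

variable {ι α β : Type*} [Fintype ι] [Fintype α] [DecidableEq α] [Fintype β] [DecidableEq β]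

theorem sum_ite_forall_notMem_eq_ite_surjective (f : ι → α) :
    ∑ T : Finset α, (-1 : ℤ) ^ #T * (if ∀ i, f i ∉ T then 1 else 0) =
      if Surjective f then 1 else 0 := by
  have avoiding : ({T | ∀ i, f i ∉ T} : Finset (Finset α)) = (univ.image f)ᶜ.powerset := by
    ext T
    simp only [mem_filter, mem_univ, true_and, mem_powerset, subset_iff, mem_compl, mem_image]
    exact ⟨fun h x hx ⟨i, hi⟩ => h i (hi ▸ hx), fun h i hi => h hi ⟨i, rfl⟩⟩
  simp only [mul_ite, mul_one, mul_zero]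
  rw [← sum_filter, avoiding, sum_powerset_neg_one_pow_card]
  simp only [compl_eq_empty_iff, eq_univ_iff_forall, mem_image, mem_univ, true_and]
  rfl

theorem card_filter_surjective_fst_snd (P : Finset (ι → α × β)) :
    (#{p ∈ P | Surjective (Prod.fst ∘ p) ∧ Surjective (Prod.snd ∘ p)} : ℤ) =
      ∑ T₁ : Finset α, ∑ T₂ : Finset β,
        (-1) ^ (#T₁ + #T₂) * (#{p ∈ P | ∀ i, (p i).1 ∉ T₁ ∧ (p i).2 ∉ T₂} : ℤ) := by
  calc (#{p ∈ P | Surjective (Prod.fst ∘ p) ∧ Surjective (Prod.snd ∘ p)} : ℤ)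
      = ∑ p ∈ P, (if Surjective (Prod.fst ∘ p) then 1 else 0) *
          (if Surjective (Prod.snd ∘ p) then 1 else 0) := by
        rw [natCast_card_filter]
        exact sum_congr rfl fun p _ => by rw [ite_zero_mul_ite_zero, one_mul]
    _ = ∑ p ∈ P, ∑ T₁ : Finset α, ∑ T₂ : Finset β,
          (-1 : ℤ) ^ (#T₁ + #T₂) * if ∀ i, (p i).1 ∉ T₁ ∧ (p i).2 ∉ T₂ then 1 else 0 := by
        refine sum_congr rfl fun p _ => ?_
        rw [← sum_ite_forall_notMem_eq_ite_surjective, ← sum_ite_forall_notMem_eq_ite_surjective,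
          sum_mul_sum]
        refine sum_congr rfl fun T₁ _ => sum_congr rfl fun T₂ _ => ?_
        simp only [comp_apply, forall_and, ite_and, pow_add]
        split_ifs <;> ring
    _ = _ := by
        rw [sum_comm]
        refine sum_congr rfl fun T₁ _ => ?_
        rw [sum_comm]
        refine sum_congr rfl fun T₂ _ => ?_
        rw [natCast_card_filter, mul_sum]

end InclusionExclusion

section Venn

variable {β : Type*} [DecidableEq β]

-- Regions `0, 1, 2, 3` are the paper's indices `00, 10, 01, 11` of `s`.
def vennRegion (T₁ T₂ : Finset β) (b : β) : Fin 4 :=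
  if b ∈ T₁ then if b ∈ T₂ then 3 else 1 else if b ∈ T₂ then 2 else 0

def vennCount (U T₁ T₂ : Finset β) (j : Fin 4) : ℕ := #{b ∈ U | vennRegion T₁ T₂ b = j}

lemma vennRegion_bijective [Fintype β] :
    Bijective fun T : Finset β × Finset β => vennRegion T.1 T.2 := by
  refine ⟨fun ⟨T₁, T₂⟩ ⟨T₁', T₂'⟩ h => ?_, fun t => ?_⟩
  · refine Prod.ext (Finset.ext fun b => ?_) (Finset.ext fun b => ?_) <;>
    · have hb := congrFun h b
      simp only [vennRegion] at hb
      split_ifs at hb <;> simp_all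
  · refine ⟨(({b | t b = 1 ∨ t b = 3} : Finset β), ({b | t b = 2 ∨ t b = 3} : Finset β)),
      funext fun b => ?_⟩
    simp only [vennRegion, mem_filter, mem_univ, true_and]
    generalize t b = x
    fin_cases x <;> decide

lemma card_filter_vennRegion_mem (U T₁ T₂ : Finset β) (S : Finset (Fin 4)) :
    #{b ∈ U | vennRegion T₁ T₂ b ∈ S} = ∑ j ∈ S, vennCount U T₁ T₂ j :=
  card_filter_mem_eq_sum_card_fiber U _ S

lemma card_sdiff_left_eq_vennCount (U T₁ T₂ : Finset β) :
    #(U \ T₁) = vennCount U T₁ T₂ 0 + vennCount U T₁ T₂ 2 := by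
  rw [← sum_pair (by decide : (0 : Fin 4) ≠ 2), ← card_filter_vennRegion_mem]
  congr 1; ext b; rw [mem_filter]
  by_cases h₁ : b ∈ T₁ <;> by_cases h₂ : b ∈ T₂ <;> simp [vennRegion, h₁, h₂]

lemma card_sdiff_right_eq_vennCount (U T₁ T₂ : Finset β) :
    #(U \ T₂) = vennCount U T₁ T₂ 0 + vennCount U T₁ T₂ 1 := by
  rw [← sum_pair (by decide : (0 : Fin 4) ≠ 1), ← card_filter_vennRegion_mem]
  congr 1; ext b; rw [mem_filter]
  by_cases h₁ : b ∈ T₁ <;> by_cases h₂ : b ∈ T₂ <;> simp [vennRegion, h₁, h₂]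

lemma card_sdiff_union_eq_vennCount (U T₁ T₂ : Finset β) :
    #(U \ (T₁ ∪ T₂)) = vennCount U T₁ T₂ 0 := by
  unfold vennCount
  congr 1; ext b; rw [mem_filter]
  by_cases h₁ : b ∈ T₁ <;> by_cases h₂ : b ∈ T₂ <;> simp [vennRegion, h₁, h₂]

lemma card_left_eq_vennCount [Fintype β] (T₁ T₂ : Finset β) :
    #T₁ = vennCount univ T₁ T₂ 1 + vennCount univ T₁ T₂ 3 := by
  rw [← sum_pair (by decide : (1 : Fin 4) ≠ 3), ← card_filter_vennRegion_mem]
  congr 1; ext b; rw [mem_filter]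
  by_cases h₁ : b ∈ T₁ <;> by_cases h₂ : b ∈ T₂ <;> simp [vennRegion, h₁, h₂]

lemma card_right_eq_vennCount [Fintype β] (T₁ T₂ : Finset β) :
    #T₂ = vennCount univ T₁ T₂ 2 + vennCount univ T₁ T₂ 3 := by
  rw [← sum_pair (by decide : (2 : Fin 4) ≠ 3), ← card_filter_vennRegion_mem]
  congr 1; ext b; rw [mem_filter]
  by_cases h₁ : b ∈ T₁ <;> by_cases h₂ : b ∈ T₂ <;> simp [vennRegion, h₁, h₂]

lemma vennCount_erase {U : Finset β} {i : β} (hi : i ∈ U) (T₁ T₂ : Finset β) (j : Fin 4) :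
    (vennCount (U.erase i) T₁ T₂ j : ℤ) =
      vennCount U T₁ T₂ j - if vennRegion T₁ T₂ i = j then 1 else 0 := by
  unfold vennCount
  rw [filter_erase]
  split_ifs with h
  · exact cast_card_erase_of_mem (mem_filter.2 ⟨hi, h⟩)
  · rw [erase_eq_of_notMem (by simp [h]), sub_zero]

lemma card_filter_ne_sdiff_prod_sdiff (U T₁ T₂ : Finset β) :
    (#{z ∈ (U \ T₁) ×ˢ (U \ T₂) | z.1 ≠ z.2} : ℤ) =
      g (vennCount U T₁ T₂ 0) (vennCount U T₁ T₂ 1) (vennCount U T₁ T₂ 2)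
        (vennCount U T₁ T₂ 3) := by
  have h := card_filter_fst_ne_snd_add_card_inter (U \ T₁) (U \ T₂)
  rw [← sdiff_union_distrib, card_sdiff_union_eq_vennCount, card_sdiff_left_eq_vennCount U T₁ T₂,
    card_sdiff_right_eq_vennCount U T₁ T₂] at h
  have h' := congrArg (Nat.cast : ℕ → ℤ) h
  push_cast at h'
  unfold g
  linear_combination h'

end Venn

section ReducedLatin

variable {β : Type*} [Fintype β] [DecidableEq β]

/-- The possible entries `(A 1 i, A 2 i)` of column `i` of a reduced three-row Latin rectangle. -/
def admissibleColumns (i : β) : Finset (β × β) :=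
  {z | z.1 ≠ i ∧ z.2 ≠ i ∧ z.1 ≠ z.2}

theorem card_reduced_latin_three_eq (n : ℕ) :
    Nat.card {A : Fin 3 → Fin n → Fin n // IsLatin A ∧ ∀ j, A 0 j = j} =
      #{p ∈ Fintype.piFinset (admissibleColumns (β := Fin n)) |
        Surjective (Prod.fst ∘ p) ∧ Surjective (Prod.snd ∘ p)} := by
  rw [← Nat.card_eq_finsetCard]
  refine Nat.card_congr
    { toFun := fun A => ⟨fun j => (A.1 1 j, A.1 2 j), ?_⟩
      invFun := fun p => ⟨![id, Prod.fst ∘ p.1, Prod.snd ∘ p.1], ?_⟩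
      left_inv := fun A => Subtype.ext <| funext fun k => ?_
      right_inv := fun p => rfl }
  · obtain ⟨A, ⟨hrow, hcol⟩, hA⟩ := A
    simp only [mem_filter, Fintype.mem_piFinset, admissibleColumns, mem_univ, true_and]
    refine ⟨fun j => ?_, Finite.injective_iff_surjective.1 (hrow 1),
      Finite.injective_iff_surjective.1 (hrow 2)⟩
    have := injective_fin_three_iff.1 (hcol j)
    rw [hA j] at this
    exact ⟨this.1.symm, this.2.1.symm, this.2.2⟩
  · obtain ⟨p, hp⟩ := p
    simp only [mem_filter, Fintype.mem_piFinset, admissibleColumns, mem_univ, true_and] at hp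
    obtain ⟨hcol, hsurj₁, hsurj₂⟩ := hp
    refine ⟨⟨fun k => ?_, fun j => injective_fin_three_iff.2
      ⟨(hcol j).1.symm, (hcol j).2.1.symm, (hcol j).2.2⟩⟩, fun j => rfl⟩
    fin_cases k
    · exact injective_id
    · exact Finite.injective_iff_surjective.2 hsurj₁
    · exact Finite.injective_iff_surjective.2 hsurj₂
  · fin_cases k
    · exact funext fun j => (A.2.2 j).symm
    · rfl
    · rfl

def columnFactor (s : Fin 4 → ℕ) (r : Fin 4) : ℤ :=
  g ((s 0 : ℤ) - if r = 0 then 1 else 0) ((s 1 : ℤ) - if r = 1 then 1 else 0)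
    ((s 2 : ℤ) - if r = 2 then 1 else 0) ((s 3 : ℤ) - if r = 3 then 1 else 0)

def reducedThreeLineTerm (s : Fin 4 → ℕ) : ℤ :=
  (-1 : ℤ) ^ (s 1 + s 2 + 2 * s 3) *
    g ((s 0 : ℤ) - 1) (s 1) (s 2) ((s 3 : ℤ) + 1) ^ (s 0) *
    g (s 0) ((s 1 : ℤ) - 1) (s 2) ((s 3 : ℤ) + 1) ^ (s 1) *
    g (s 0) (s 1) ((s 2 : ℤ) - 1) ((s 3 : ℤ) + 1) ^ (s 2) *
    g (s 0) (s 1) (s 2) (s 3) ^ (s 3)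

lemma card_admissibleColumns_avoiding (T₁ T₂ : Finset β) (i : β) :
    (#{z ∈ admissibleColumns i | z.1 ∉ T₁ ∧ z.2 ∉ T₂} : ℤ) =
      columnFactor (vennCount univ T₁ T₂) (vennRegion T₁ T₂ i) := by
  have pairs : {z ∈ admissibleColumns i | z.1 ∉ T₁ ∧ z.2 ∉ T₂} =
      {z ∈ (univ.erase i \ T₁) ×ˢ (univ.erase i \ T₂) | z.1 ≠ z.2} := by
    ext z
    simp only [admissibleColumns, mem_filter, mem_univ, true_and, mem_product, mem_sdiff,
      mem_erase]
    tauto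
  rw [pairs, card_filter_ne_sdiff_prod_sdiff]
  simp only [vennCount_erase (mem_univ i), columnFactor]

lemma neg_one_pow_mul_card_avoiding_eq (T₁ T₂ : Finset β) :
    (-1 : ℤ) ^ (#T₁ + #T₂) *
        #{p ∈ Fintype.piFinset admissibleColumns | ∀ i, (p i).1 ∉ T₁ ∧ (p i).2 ∉ T₂} =
      reducedThreeLineTerm (vennCount univ T₁ T₂) := by
  rw [filter_piFinset_forall admissibleColumns fun _ (z : β × β) => z.1 ∉ T₁ ∧ z.2 ∉ T₂,
    Fintype.card_piFinset, Nat.cast_prod,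
    prod_congr rfl fun i _ => card_admissibleColumns_avoiding T₁ T₂ i,
    ← prod_fiberwise' univ (vennRegion T₁ T₂), card_left_eq_vennCount T₁ T₂,
    card_right_eq_vennCount T₁ T₂]
  simp only [prod_const, Fin.prod_univ_four, reducedThreeLineTerm, columnFactor, vennCount, g,
    ↓reduceIte, Fin.reduceEq, sub_zero]
  ring

end ReducedLatin

theorem reduced_three_line_formula (n : ℕ) :
    (Nat.card {A : Fin 3 → Fin n → Fin n // IsLatin A ∧ ∀ j, A 0 j = j} : ℤ) =
      ∑ s ∈ Finset.Nat.antidiagonalTuple 4 n,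
        (-1 : ℤ) ^ (s 1 + s 2 + 2 * s 3) *
          (Nat.multinomial Finset.univ s : ℤ) *
          g ((s 0 : ℤ) - 1) (s 1) (s 2) ((s 3 : ℤ) + 1) ^ (s 0) *
          g (s 0) ((s 1 : ℤ) - 1) (s 2) ((s 3 : ℤ) + 1) ^ (s 1) *
          g (s 0) (s 1) ((s 2 : ℤ) - 1) ((s 3 : ℤ) + 1) ^ (s 2) *
          g (s 0) (s 1) (s 2) (s 3) ^ (s 3) := by
  rw [card_reduced_latin_three_eq, card_filter_surjective_fst_snd]
  simp only [neg_one_pow_mul_card_avoiding_eq]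
  rw [← Fintype.sum_prod_type' (f := fun T₁ T₂ => reducedThreeLineTerm (vennCount univ T₁ T₂))]
  refine (vennRegion_bijective.sum_comp
    fun t => reducedThreeLineTerm fun j => #{b | t b = j}).trans ?_
  rw [sum_fun_card_fiber_eq_sum_multinomial, Fintype.card_fin]
  refine sum_congr rfl fun s _ => ?_
  rw [nsmul_eq_mul, reducedThreeLineTerm]
  ring
end

section
/- The number of (not necessarily reduced) 2×n Latin rectangles equals n! · D(n), and satisfies L_2(n) = Σ_{s_{00}+s_{10}+s_{01}+s_{11}=n} (-1)^{s_{10}+s_{01}+2s_{11}} · multinomial(n; s_{00},s_{10},s_{01},s_{11}) · [(s_{00}+s_{10})(s_{00}+s_{01}) - s_{00}]^n. -/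
/-!
Inclusion–exclusion over pairs `(A, B)` of sets of values forbidden in the first and the second
row: the pairs of maps `Fin n → Fin n` avoiding `A` resp. `B` and discordant at every column are
counted by `N(A, B) ^ n`, where `N(A, B)` is the number of admissible columns, and summing with
sign `(-1) ^ (#A + #B)` keeps exactly the pairs of surjections, i.e. the Latin rectangles.
Encoding `(A, B)` as a colouring `Fin n → Fin 4`, both the sign and `N(A, B)` depend only on the
sizes `s` of the four colour classes, and there are `multinomial s` colourings with class sizes
`s`, as one reads off the coefficient of `X ^ s` in `(X 0 + X 1 + X 2 + X 3) ^ n`.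
-/

open Finset Function

variable {β ι : Type*}

section FiberCard

variable [Fintype β] [DecidableEq ι]

def fiberCard (c : β → ι) (i : ι) : ℕ := #{x | c x = i}

theorem prod_comp_eq_prod_pow_fiberCard [Fintype ι] {M : Type*} [CommMonoid M] (c : β → ι)
    (f : ι → M) : ∏ x, f (c x) = ∏ i, f i ^ fiberCard c i := by
  rw [← Finset.prod_fiberwise' univ c f]
  simp [fiberCard]

theorem card_filter_mem_eq_sum_fiberCard (c : β → ι) (T : Finset ι) :
    #{x | c x ∈ T} = ∑ i ∈ T, fiberCard c i := by
  rw [card_eq_sum_card_fiberwise (f := c) (s := {x | c x ∈ T}) (t := T)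
    fun x hx => (mem_filter.1 hx).2]
  refine sum_congr rfl fun i hi => congrArg card ?_
  rw [filter_filter]
  exact filter_congr fun x _ => ⟨And.right, fun h => ⟨h ▸ hi, h⟩⟩

theorem sum_fiberCard [Fintype ι] (c : β → ι) : ∑ i, fiberCard c i = Fintype.card β := by
  simpa using (card_filter_mem_eq_sum_fiberCard c univ).symm

theorem card_filter_fiberCard_eq_multinomial [Fintype ι] [DecidableEq β] {s : ι → ℕ}
    (hs : ∑ i, s i = Fintype.card β) :
    #{c : β → ι | fiberCard c = s} = Nat.multinomial univ s := by
  open MvPolynomial in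
  have hexpand : (∑ i, X i : MvPolynomial ι ℕ) ^ Fintype.card β =
      ∑ c : β → ι, monomial (Finsupp.equivFunOnFinite.symm (fiberCard c)) 1 := by
    rw [← card_univ, ← prod_const, Fintype.prod_sum]
    refine sum_congr rfl fun c _ => ?_
    rw [prod_comp_eq_prod_pow_fiberCard, ← prod_X_pow_eq_monomial]
    exact (prod_subset (subset_univ _) fun i _ hi => by simp_all).symm
  have hcoeff := coeff_sum_X_pow_of_fintype (R := ℕ) (Finsupp.equivFunOnFinite.symm s)
    (Fintype.card β)
  have hdegree : (Finsupp.equivFunOnFinite.symm s).sum (fun _ m => m) = Fintype.card β := by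
    rw [Finsupp.sum_fintype _ _ fun _ => rfl]
    exact hs
  simpa [hexpand, coeff_sum, coeff_monomial, hdegree,
    Finsupp.multinomial_eq_of_support_subset (subset_univ _)] using hcoeff

theorem sum_comp_fiberCard [Fintype ι] [DecidableEq β] {M : Type*} [AddCommMonoid M]
    (G : (ι → ℕ) → M) :
    ∑ c : β → ι, G (fiberCard c) =
      ∑ s ∈ piAntidiag univ (Fintype.card β), Nat.multinomial univ s • G s := by
  rw [← sum_fiberwise_of_maps_to (g := fiberCard) (t := piAntidiag univ (Fintype.card β))
    fun c _ => by simp [sum_fiberCard]]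
  refine sum_congr rfl fun s hs => ?_
  rw [sum_congr rfl fun c hc => by rw [(mem_filter.1 hc).2], sum_const,
    card_filter_fiberCard_eq_multinomial (by simpa using hs)]

end FiberCard

theorem card_filter_ne_product_add_card_inter [DecidableEq β] (S T : Finset β) :
    #{p ∈ S ×ˢ T | p.1 ≠ p.2} + #(S ∩ T) = #S * #T := by
  have hdiag : {p ∈ S ×ˢ T | ¬p.1 ≠ p.2} = (S ∩ T).diag := by
    ext ⟨x, y⟩
    simp only [mem_filter, mem_product, mem_diag, mem_inter]
    grind
  rw [← card_product, ← card_filter_add_card_filter_not (s := S ×ˢ T) (fun p => p.1 ≠ p.2),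
    hdiag, diag_card]

section Discordant

open Equiv

variable (α : Type*) [Fintype α] [DecidableEq α]

def discordantEquivProdDerangements :
    {p : Perm α × Perm α // ∀ j, p.1 j ≠ p.2 j} ≃ Perm α × derangements α where
  toFun p := (p.1.2, ⟨p.1.2⁻¹ * p.1.1, fun x hx => p.2 x (by simpa using congrArg p.1.2 hx)⟩)
  invFun q := ⟨(q.1 * q.2.1, q.1), fun x h => q.2.2 x (q.1.injective h)⟩
  left_inv p := by ext <;> simp
  right_inv q := by ext <;> simp

theorem card_discordant_eq_factorial_mul_numDerangements :
    Nat.card {p : Perm α × Perm α // ∀ j, p.1 j ≠ p.2 j} =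
      (Fintype.card α).factorial * numDerangements (Fintype.card α) := by
  rw [Nat.card_congr (discordantEquivProdDerangements α), Nat.card_eq_fintype_card,
    Fintype.card_prod, Fintype.card_perm, card_derangements_eq_numDerangements]

theorem card_discordant_eq_card_surjective :
    Nat.card {p : Perm α × Perm α // ∀ j, p.1 j ≠ p.2 j} =
      #{h : α → α × α | Surjective (Prod.fst ∘ h) ∧ Surjective (Prod.snd ∘ h) ∧
        ∀ j, (h j).1 ≠ (h j).2} := by
  rw [Nat.card_eq_fintype_card, ← Fintype.card_subtype]
  exact Fintype.card_congr
    { toFun p := ⟨fun j => (p.1.1 j, p.1.2 j), p.1.1.surjective, p.1.2.surjective, p.2⟩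
      invFun h := ⟨(ofBijective _ (Finite.surjective_iff_bijective.1 h.2.1),
        ofBijective _ (Finite.surjective_iff_bijective.1 h.2.2.1)), h.2.2.2⟩
      left_inv p := Subtype.ext (Prod.ext (Equiv.ext fun _ => rfl) (Equiv.ext fun _ => rfl))
      right_inv h := rfl }

end Discordant

section InclusionExclusion

variable [Fintype β]

/- A colouring `c : β → Fin 4` encodes the pair `(A, B)` of forbidden sets: colour `1` marks
`A \ B`, colour `2` marks `B \ A` and colour `3` marks `A ∩ B`. So `colourSign` is the
contribution of one point to `(-1) ^ (#A + #B)`, and `admissiblePairs c` is the set of columns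
`(x, y)` with `x ∉ A`, `y ∉ B` and `x ≠ y`. -/
def colourSign : Fin 4 → ℤ := ![1, -1, -1, 1]

theorem sum_colourSign_mul_boole (P Q : Prop) [Decidable P] [Decidable Q] :
    ∑ i, colourSign i *
        (if (P → i ∈ ({0, 2} : Finset (Fin 4))) ∧ (Q → i ∈ ({0, 1} : Finset (Fin 4)))
          then 1 else 0) =
      if P ∧ Q then 1 else 0 := by
  by_cases hP : P <;> by_cases hQ : Q <;> simp [hP, hQ, Fin.sum_univ_four, colourSign]

theorem prod_colourSign_eq (c : β → Fin 4) :
    ∏ x, colourSign (c x) = (-1) ^ (fiberCard c 1 + fiberCard c 2 + 2 * fiberCard c 3) := by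
  simp [prod_comp_eq_prod_pow_fiberCard, Fin.prod_univ_four, colourSign, pow_add, pow_mul]

variable [DecidableEq β]

def admissiblePairs (c : β → Fin 4) : Finset (β × β) :=
  {p ∈ ({x | c x ∈ ({0, 2} : Finset (Fin 4))} : Finset β) ×ˢ
    ({x | c x ∈ ({0, 1} : Finset (Fin 4))} : Finset β) | p.1 ≠ p.2}

theorem card_admissiblePairs (c : β → Fin 4) :
    (#(admissiblePairs c) : ℤ) =
      (fiberCard c 0 + fiberCard c 1) * (fiberCard c 0 + fiberCard c 2) - fiberCard c 0 := by
  have hcount := card_filter_ne_product_add_card_inter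
    {x | c x ∈ ({0, 2} : Finset (Fin 4))} {x | c x ∈ ({0, 1} : Finset (Fin 4))}
  have hboth : ∀ i : Fin 4,
      i ∈ ({0, 2} : Finset (Fin 4)) ∧ i ∈ ({0, 1} : Finset (Fin 4)) ↔ i = 0 := by
    decide
  rw [← filter_and, filter_congr fun x _ => hboth (c x), card_filter_mem_eq_sum_fiberCard,
    card_filter_mem_eq_sum_fiberCard, sum_pair (by decide), sum_pair (by decide)] at hcount
  change #(admissiblePairs c) + fiberCard c 0 = _ at hcount
  zify at hcount
  linear_combination hcount

theorem sum_prod_colourSign_mul_boole_forall_mem_admissiblePairs [Fintype ι]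
    (h : ι → β × β) :
    ∑ c : β → Fin 4, (∏ x, colourSign (c x)) *
        (if ∀ j, h j ∈ admissiblePairs c then 1 else 0) =
      if Surjective (Prod.fst ∘ h) ∧ Surjective (Prod.snd ∘ h) ∧ ∀ j, (h j).1 ≠ (h j).2
        then 1 else 0 := by
  by_cases hd : ∀ j, (h j).1 ≠ (h j).2
  · have hmem : ∀ c : β → Fin 4, (∀ j, h j ∈ admissiblePairs c) ↔
        ∀ x, ((∃ j, (h j).1 = x) → c x ∈ ({0, 2} : Finset (Fin 4))) ∧
          ((∃ j, (h j).2 = x) → c x ∈ ({0, 1} : Finset (Fin 4))) := by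
      intro c
      simp only [admissiblePairs, mem_filter, mem_product, mem_univ, true_and]
      grind
    simp_rw [hmem, ← Fintype.prod_boole, ← prod_mul_distrib]
    rw [← Fintype.prod_sum fun x i => colourSign i *
      if ((∃ j, (h j).1 = x) → i ∈ ({0, 2} : Finset (Fin 4))) ∧
        ((∃ j, (h j).2 = x) → i ∈ ({0, 1} : Finset (Fin 4))) then 1 else 0]
    simp_rw [sum_colourSign_mul_boole, Fintype.prod_boole, forall_and]
    simp [Surjective, hd]
  · have hnot : ∀ c, ¬∀ j, h j ∈ admissiblePairs c :=
      fun c hc => hd fun j => (mem_filter.1 (hc j)).2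
    simp [hnot, hd]

theorem sum_prod_colourSign_mul_card_admissiblePairs_pow [Fintype ι] [DecidableEq ι] :
    ∑ c : β → Fin 4,
        (∏ x, colourSign (c x)) * (#(admissiblePairs c) : ℤ) ^ Fintype.card ι =
      #{h : ι → β × β | Surjective (Prod.fst ∘ h) ∧ Surjective (Prod.snd ∘ h) ∧
        ∀ j, (h j).1 ≠ (h j).2} := by
  have hpow : ∀ c : β → Fin 4, (#(admissiblePairs c) : ℤ) ^ Fintype.card ι =
      ∑ h : ι → β × β, if ∀ j, h j ∈ admissiblePairs c then 1 else 0 := by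
    intro c
    have hpi : ({h : ι → β × β | ∀ j, h j ∈ admissiblePairs c} : Finset _) =
        Fintype.piFinset fun _ => admissiblePairs c := by
      ext; simp
    rw [sum_boole, hpi, Fintype.card_piFinset, prod_const, card_univ, Nat.cast_pow]
  simp_rw [hpow, mul_sum]
  rw [sum_comm, natCast_card_filter]
  exact sum_congr rfl fun h _ => sum_prod_colourSign_mul_boole_forall_mem_admissiblePairs h

end InclusionExclusion

theorem two_line_latin_formula (n : ℕ) :
    Nat.card {p : Equiv.Perm (Fin n) × Equiv.Perm (Fin n) // ∀ j, p.1 j ≠ p.2 j} =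
        n.factorial * numDerangements n ∧
    (Nat.card {p : Equiv.Perm (Fin n) × Equiv.Perm (Fin n) // ∀ j, p.1 j ≠ p.2 j} : ℤ) =
      ∑ s ∈ Finset.Nat.antidiagonalTuple 4 n,
        (-1 : ℤ) ^ (s 1 + s 2 + 2 * s 3) *
          (Nat.multinomial Finset.univ s : ℤ) *
          (((s 0 : ℤ) + s 1) * ((s 0 : ℤ) + s 2) - s 0) ^ n := by
  refine ⟨by simpa using card_discordant_eq_factorial_mul_numDerangements (Fin n), ?_⟩
  rw [card_discordant_eq_card_surjective,
    ← sum_prod_colourSign_mul_card_admissiblePairs_pow (ι := Fin n)]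
  simp only [prod_colourSign_eq, card_admissiblePairs, Fintype.card_fin]
  refine (sum_comp_fiberCard fun s => (-1 : ℤ) ^ (s 1 + s 2 + 2 * s 3) *
    (((s 0 : ℤ) + s 1) * ((s 0 : ℤ) + s 2) - s 0) ^ n).trans ?_
  rw [Fintype.card_fin, piAntidiag_univ_fin_eq_antidiagonalTuple]
  refine sum_congr rfl fun s _ => ?_
  rw [nsmul_eq_mul]
  ring
end
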